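/- arXiv:1405.7085 — 2 statements merged into one kernel-verified Lean document; each statement's English description precedes it below -/
import Mathlib

section
/- For a nonincreasing sequence of gaps: if 0 < r₁ ≤ r₂ ≤ ... ≤ r_i are real numbers with r_j - r_{j-1} ≤ r_{j-1} - r_{j-2} for all 3 ≤ j ≤ i and r₂ - r₁ ≤ r₁ (taking r₀ = 0 gives r₁ ≤ r₁), then (r_{i-1}^p / r₁^p) · ((r_i/r_{i-1})^p - 1)/((r₂/r₁)^p - 1) ≤ (i-1)^p for every positive integer p, provided r₂ > r₁. -/
/-!
Write `n = i - 1`. The gaps are nonincreasing, hence all at most `d = r₂ - r₁`; so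
`rᵢ ≤ r₁ + n d ≤ n r₂` and `rᵢ - r_n ≤ d ≤ n d`. Since `x ↦ x ^ p` has increasing increments on
`[0, ∞)`, its increment over `[r_n, rᵢ]` is at most its increment over `[n r₁, n r₂]`, i.e.
`rᵢ ^ p - r_n ^ p ≤ n ^ p (r₂ ^ p - r₁ ^ p)`, which is the claim once the fractions are cleared.
-/

lemma add_pow_sub_pow_le_add_pow_sub_pow {b e h : ℝ} (p : ℕ) (hb : 0 ≤ b) (hbe : b ≤ e)
    (hh : 0 ≤ h) : (b + h) ^ p - b ^ p ≤ (e + h) ^ p - e ^ p := by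
  rw [← geom_sum₂_mul, ← geom_sum₂_mul, add_sub_cancel_left, add_sub_cancel_left]
  gcongr
  all_goals first | linarith | exact pow_nonneg (by linarith) _

lemma pow_sub_pow_le_pow_sub_pow_of_sub_le {a b u v : ℝ} (p : ℕ) (hb : 0 ≤ b) (hba : b ≤ a)
    (hu : 0 ≤ u) (hav : a ≤ v) (h : a - b ≤ v - u) : a ^ p - b ^ p ≤ v ^ p - u ^ p := by
  have hshift := add_pow_sub_pow_le_add_pow_sub_pow p hb (by linarith : b ≤ v - (a - b))
    (sub_nonneg.2 hba)
  have hpow : u ^ p ≤ (v - (a - b)) ^ p := pow_le_pow_left₀ hu (by linarith) p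
  simp only [add_sub_cancel, sub_add_cancel] at hshift
  linarith

lemma le_add_mul_of_forall_sub_le {f : ℕ → ℝ} {a m : ℕ} {d : ℝ}
    (h : ∀ k < m, f (a + k + 1) - f (a + k) ≤ d) : f (a + m) ≤ f a + m * d := by
  induction m with
  | zero => simp
  | succ m ih =>
    have hlast := h m m.lt_succ_self
    have hprev := ih fun k hk => h k (hk.trans m.lt_succ_self)
    push_cast
    rw [← add_assoc]
    linarith

lemma pow_sub_pow_le_natCast_pow_mul_of_antitoneOn_sub {r : ℕ → ℝ} {n : ℕ} (p : ℕ) (hn : 1 ≤ n)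
    (hpos : 0 < r 1) (hmono : MonotoneOn r (Set.Icc 1 (n + 1)))
    (hgap : AntitoneOn (fun j => r (j + 1) - r j) (Set.Icc 1 n)) :
    r (n + 1) ^ p - r n ^ p ≤ (n : ℝ) ^ p * (r 2 ^ p - r 1 ^ p) := by
  have h1n : r 1 ≤ r n := hmono ⟨le_rfl, by omega⟩ ⟨hn, by omega⟩ hn
  have hnn : r n ≤ r (n + 1) := hmono ⟨hn, by omega⟩ ⟨by omega, le_rfl⟩ n.le_succ
  have h12 : r 1 ≤ r 2 := hmono ⟨le_rfl, by omega⟩ ⟨by omega, by omega⟩ (by omega)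
  have hlast : r (n + 1) - r n ≤ r 2 - r 1 := hgap ⟨le_rfl, hn⟩ ⟨hn, le_rfl⟩ hn
  have hup : r (1 + n) ≤ r 1 + n * (r 2 - r 1) := le_add_mul_of_forall_sub_le fun k hk =>
    hgap (a := 1) ⟨le_rfl, hn⟩ ⟨by omega, by omega⟩ (by omega)
  rw [add_comm] at hup
  have hn' : 0 ≤ (n : ℝ) - 1 := sub_nonneg.2 (by exact_mod_cast hn)
  rw [mul_sub, ← mul_pow, ← mul_pow]
  refine pow_sub_pow_le_pow_sub_pow_of_sub_le p (hpos.trans_le h1n).le hnn (by positivity) ?_ ?_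
  · nlinarith [mul_nonneg hn' hpos.le]
  · nlinarith [mul_nonneg hn' (sub_nonneg.2 h12)]

theorem stmt5_general (i pdim : ℕ) (r : ℕ → ℝ)
    (hi : 2 ≤ i)
    (hpos : 0 < r 1)
    (hmono : ∀ j, 1 ≤ j → j < i → r j ≤ r (j + 1))
    (hgap : ∀ j, 3 ≤ j → j ≤ i → r j - r (j - 1) ≤ r (j - 1) - r (j - 2)) :
    (r (i - 1)) ^ pdim / (r 1) ^ pdim *
      (((r i / r (i - 1)) ^ pdim - 1) / ((r 2 / r 1) ^ pdim - 1)) ≤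
      ((i : ℝ) - 1) ^ pdim := by
  obtain ⟨n, rfl⟩ : ∃ n, i = n + 1 := ⟨i - 1, by omega⟩
  have hn : 1 ≤ n := by omega
  have hmonoOn : MonotoneOn r (Set.Icc 1 (n + 1)) :=
    monotoneOn_of_le_succ Set.ordConnected_Icc fun j _ hj hj' => by
      simp only [Set.mem_Icc, Nat.succ_eq_succ] at hj hj' ⊢
      exact hmono j hj.1 (by omega)
  have hgapOn : AntitoneOn (fun j => r (j + 1) - r j) (Set.Icc 1 n) :=
    antitoneOn_of_succ_le Set.ordConnected_Icc fun j _ hj hj' => by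
      simp only [Set.mem_Icc, Nat.succ_eq_succ] at hj hj' ⊢
      simpa using hgap (j + 2) (by omega) (by omega)
  have hrn : r n ≠ 0 := (hpos.trans_le (hmonoOn ⟨le_rfl, by omega⟩ ⟨hn, by omega⟩ hn)).ne'
  have hratio : r n ^ pdim / r 1 ^ pdim * (((r (n + 1) / r n) ^ pdim - 1) / ((r 2 / r 1) ^ pdim - 1))
      = (r (n + 1) ^ pdim - r n ^ pdim) / (r 2 ^ pdim - r 1 ^ pdim) := by
    rw [div_pow, div_pow, div_sub_one (pow_ne_zero _ hrn), div_sub_one (pow_ne_zero _ hpos.ne')]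
    field_simp
  simp only [Nat.add_sub_cancel, Nat.cast_add, Nat.cast_one, add_sub_cancel_right, hratio]
  exact div_le_of_le_mul₀ (sub_nonneg.2 (pow_le_pow_left₀ hpos.le (hmono 1 le_rfl (by omega)) _))
    (by positivity) (pow_sub_pow_le_natCast_pow_mul_of_antitoneOn_sub pdim hn hpos hmonoOn hgapOn)

/-- Volume-ratio bound from a nondecreasing sequence with nonincreasing gaps:
(r_{i-1}^p / r₁^p) · ((r_i/r_{i-1})^p - 1)/((r₂/r₁)^p - 1) ≤ (i-1)^p. -/
theorem stmt5 (i pdim : ℕ) (r : ℕ → ℝ)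
    (hi : 2 ≤ i) (hp : 1 ≤ pdim)
    (hpos : 0 < r 1)
    (hmono : ∀ j, 1 ≤ j → j < i → r j ≤ r (j + 1))
    (hgap : ∀ j, 3 ≤ j → j ≤ i → r j - r (j - 1) ≤ r (j - 1) - r (j - 2))
    (hfirst : r 2 - r 1 ≤ r 1)
    (hlt : r 1 < r 2) :
    (r (i - 1)) ^ pdim / (r 1) ^ pdim *
      (((r i / r (i - 1)) ^ pdim - 1) / ((r 2 / r 1) ^ pdim - 1)) ≤
      ((i : ℝ) - 1) ^ pdim :=
  stmt5_general i pdim r hi hpos hmono hgap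
end

section
/- Mixture perturbation preserves multiplicative closeness: let μ_C be a probability measure on C with density bounded below by μ* > 0 on a subset B ⊆ C of volume Vol(B) > 0, let μ̂_good satisfy Dist_∞(μ̂_good, μ_C) ≤ ε̃/4, and define μ̂ = (1 - 2^{-m}) μ̂_good + 2^{-m} Unif(B). If 2^{-m}/(μ* Vol(B)) ≤ e^{ε̃/2}(e^{ε̃/2} - 1) and 1 - 2^{-m} ≥ e^{-ε̃/4}, then Dist_∞(μ̂, μ_C) ≤ ε̃. -/
/-!
Write `δ = 2⁻ᵐ`, so that `μ̂ = (1 - δ) μ̂_good + δ Unif(B)`. The lower bound only uses the first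
summand: `(1 - δ) μ̂_good ≥ e^{-ε̃/4} e^{-ε̃/4} μ_C`. For the upper bound, the density bound turns
`Unif(B)(U) = vol(U ∩ B) / vol(B)` into at most `μ_C(U) / (μ* vol(B))`, hence
`μ̂(U) ≤ (e^{ε̃/4} + δ / (μ* vol(B))) μ_C(U) ≤ (e^{ε̃/4} + e^{ε̃} - e^{ε̃/2}) μ_C(U) ≤ e^{ε̃} μ_C(U)`.
-/

open MeasureTheory ProbabilityTheory ENNReal

section DensityLowerBound

variable {α : Type*} [MeasurableSpace α] {μ ν : Measure α} {B C : Set α} {c : ℝ≥0∞}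

lemma measure_ne_top_of_mul_le [IsFiniteMeasure μ] (hc : c ≠ 0) (h : c * ν B ≤ μ B) :
    ν B ≠ ∞ := by
  intro hνB
  rw [hνB, ENNReal.mul_top hc] at h
  exact measure_ne_top μ B (top_le_iff.1 h)

lemma cond_apply_le_inv_mul_of_mul_le (hc : c ≠ 0) (hc' : c ≠ ∞) (hB : MeasurableSet B)
    (hBC : B ⊆ C) (hdensity : ∀ U, MeasurableSet U → U ⊆ C → c * ν U ≤ μ U)
    {U : Set α} (hU : MeasurableSet U) :
    ν[U | B] ≤ (c * ν B)⁻¹ * μ U := by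
  have hinter : ν (B ∩ U) ≤ c⁻¹ * μ U :=
    (ENNReal.mul_le_iff_le_inv hc hc').1 <|
      (hdensity _ (hB.inter hU) (Set.inter_subset_left.trans hBC)).trans
        (measure_mono Set.inter_subset_right)
  calc ν[U | B] = (ν B)⁻¹ * ν (B ∩ U) := cond_apply hB ν U
    _ ≤ (ν B)⁻¹ * (c⁻¹ * μ U) := by gcongr
    _ = (c * ν B)⁻¹ * μ U := by
      rw [ENNReal.mul_inv (Or.inl hc) (Or.inl hc')]
      ring

end DensityLowerBound

lemma Real.exp_div_four_add_le_exp {ε x : ℝ} (hε : 0 ≤ ε)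
    (hx : x ≤ Real.exp (ε / 2) * (Real.exp (ε / 2) - 1)) :
    Real.exp (ε / 4) + x ≤ Real.exp ε := by
  have hquarter : Real.exp (ε / 4) ≤ Real.exp (ε / 2) := Real.exp_le_exp.2 (by linarith)
  have hhalf : Real.exp (ε / 2) * Real.exp (ε / 2) = Real.exp ε := by
    rw [← Real.exp_add, add_halves]
  linarith

lemma Real.exp_neg_le_mul_exp_neg_div_four {ε δ : ℝ} (hε : 0 ≤ ε)
    (hδ : Real.exp (-(ε / 4)) ≤ 1 - δ) :
    Real.exp (-ε) ≤ (1 - δ) * Real.exp (-(ε / 4)) :=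
  calc Real.exp (-ε) ≤ Real.exp (-(ε / 4)) * Real.exp (-(ε / 4)) := by
        rw [← Real.exp_add]; exact Real.exp_le_exp.2 (by linarith)
    _ ≤ (1 - δ) * Real.exp (-(ε / 4)) := by gcongr

lemma ENNReal.ofReal_mul_inv_ofReal_mul {a b : ℝ} {x : ℝ≥0∞} (hb : 0 < b) (hx₀ : x ≠ 0)
    (hx : x ≠ ∞) :
    ENNReal.ofReal a * (ENNReal.ofReal b * x)⁻¹ = ENNReal.ofReal (a / (b * x.toReal)) := by
  have hxpos : 0 < x.toReal := ENNReal.toReal_pos hx₀ hx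
  rw [ENNReal.ofReal_div_of_pos (by positivity), ENNReal.ofReal_mul hb.le,
    ENNReal.ofReal_toReal hx, div_eq_mul_inv]

theorem stmt16_general (p : ℕ) (C B : Set (EuclideanSpace ℝ (Fin p)))
    (μC μgood : Measure (EuclideanSpace ℝ (Fin p)))
    [IsProbabilityMeasure μC]
    (μstar εt : ℝ) (m : ℕ)
    (hBC : B ⊆ C) (hB : MeasurableSet B)
    (hvol : 0 < volume B) (hμstar : 0 < μstar) (hεt : 0 < εt)
    (hdensity : ∀ U : Set (EuclideanSpace ℝ (Fin p)), MeasurableSet U → U ⊆ C →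
      ENNReal.ofReal μstar * volume U ≤ μC U)
    (hgood : ∀ U : Set (EuclideanSpace ℝ (Fin p)), MeasurableSet U →
      ENNReal.ofReal (Real.exp (-(εt / 4))) * μC U ≤ μgood U ∧
      μgood U ≤ ENNReal.ofReal (Real.exp (εt / 4)) * μC U)
    (hcond1 : (2:ℝ)⁻¹ ^ m / (μstar * (volume B).toReal) ≤
      Real.exp (εt / 2) * (Real.exp (εt / 2) - 1))
    (hcond2 : Real.exp (-(εt / 4)) ≤ 1 - (2:ℝ)⁻¹ ^ m) :
    let μhat : Measure (EuclideanSpace ℝ (Fin p)) :=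
      ENNReal.ofReal (1 - (2:ℝ)⁻¹ ^ m) • μgood +
        ENNReal.ofReal ((2:ℝ)⁻¹ ^ m) • ((volume B)⁻¹ • volume.restrict B)
    ∀ U : Set (EuclideanSpace ℝ (Fin p)), MeasurableSet U →
      ENNReal.ofReal (Real.exp (-εt)) * μC U ≤ μhat U ∧
      μhat U ≤ ENNReal.ofReal (Real.exp εt) * μC U := by
  intro μhat U hU
  set δ : ℝ := (2:ℝ)⁻¹ ^ m
  have hδ : 0 ≤ δ := by positivity
  have hc : ENNReal.ofReal μstar ≠ 0 := (ENNReal.ofReal_pos.2 hμstar).ne'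
  have hBfin : volume B ≠ ∞ := measure_ne_top_of_mul_le hc (hdensity B hB hBC)
  have hμhat : μhat U = ENNReal.ofReal (1 - δ) * μgood U + ENNReal.ofReal δ * volume[U | B] :=
    rfl
  constructor
  · calc ENNReal.ofReal (Real.exp (-εt)) * μC U
        ≤ ENNReal.ofReal (1 - δ) * (ENNReal.ofReal (Real.exp (-(εt / 4))) * μC U) := by
          rw [← mul_assoc, ← ENNReal.ofReal_mul (hcond2.trans' (Real.exp_nonneg _))]
          gcongr
          exact Real.exp_neg_le_mul_exp_neg_div_four hεt.le hcond2
      _ ≤ ENNReal.ofReal (1 - δ) * μgood U := by gcongr; exact (hgood U hU).1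
      _ ≤ μhat U := hμhat ▸ le_self_add
  · calc μhat U
        ≤ ENNReal.ofReal (Real.exp (εt / 4)) * μC U +
            ENNReal.ofReal δ * ((ENNReal.ofReal μstar * volume B)⁻¹ * μC U) := by
          rw [hμhat]
          refine add_le_add ?_ (mul_le_mul_right ?_ _)
          · exact (mul_le_of_le_one_left' (ENNReal.ofReal_le_one.2 (by linarith))).trans
              (hgood U hU).2
          · exact cond_apply_le_inv_mul_of_mul_le hc ENNReal.ofReal_ne_top hB hBC hdensity hU
      _ = ENNReal.ofReal (Real.exp (εt / 4) + δ / (μstar * (volume B).toReal)) * μC U := by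
          rw [ENNReal.ofReal_add (Real.exp_nonneg _) (by positivity),
            ← ENNReal.ofReal_mul_inv_ofReal_mul hμstar hvol.ne' hBfin]
          ring
      _ ≤ ENNReal.ofReal (Real.exp εt) * μC U := by
          gcongr
          exact Real.exp_div_four_add_le_exp hεt.le hcond1

/-- Mixing a multiplicatively close measure with a small uniform component on B ⊆ C
preserves multiplicative closeness to μ_C (with parameter ε̃), given the mass conditions. -/
theorem stmt16 (p : ℕ) (C B : Set (EuclideanSpace ℝ (Fin p)))
    (μC μgood : Measure (EuclideanSpace ℝ (Fin p)))
    [IsProbabilityMeasure μC] [IsProbabilityMeasure μgood]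
    (μstar εt : ℝ) (m : ℕ)
    (hBC : B ⊆ C) (hB : MeasurableSet B)
    (hvol : 0 < volume B) (hμstar : 0 < μstar) (hεt : 0 < εt) (hm : 0 < m)
    (hdensity : ∀ U : Set (EuclideanSpace ℝ (Fin p)), MeasurableSet U → U ⊆ C →
      ENNReal.ofReal μstar * volume U ≤ μC U)
    (hgood : ∀ U : Set (EuclideanSpace ℝ (Fin p)), MeasurableSet U →
      ENNReal.ofReal (Real.exp (-(εt / 4))) * μC U ≤ μgood U ∧
      μgood U ≤ ENNReal.ofReal (Real.exp (εt / 4)) * μC U)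
    (hcond1 : (2:ℝ)⁻¹ ^ m / (μstar * (volume B).toReal) ≤
      Real.exp (εt / 2) * (Real.exp (εt / 2) - 1))
    (hcond2 : Real.exp (-(εt / 4)) ≤ 1 - (2:ℝ)⁻¹ ^ m) :
    let μhat : Measure (EuclideanSpace ℝ (Fin p)) :=
      ENNReal.ofReal (1 - (2:ℝ)⁻¹ ^ m) • μgood +
        ENNReal.ofReal ((2:ℝ)⁻¹ ^ m) • ((volume B)⁻¹ • volume.restrict B)
    ∀ U : Set (EuclideanSpace ℝ (Fin p)), MeasurableSet U →
      ENNReal.ofReal (Real.exp (-εt)) * μC U ≤ μhat U ∧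
      μhat U ≤ ENNReal.ofReal (Real.exp εt) * μC U :=
  stmt16_general p C B μC μgood μstar εt m hBC hB hvol hμstar hεt hdensity hgood hcond1 hcond2
end
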